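/- arXiv:2011.09514 — 2 statements merged into one kernel-verified Lean document; each statement's English description precedes it below -/
import Mathlib

section
/- Let X be a real random variable on a probability space (Ω, P) whose law is absolutely continuous with respect to Lebesgue measure with a density f : ℝ → ℝ that is monotone nondecreasing on (−∞, m] and monotone nonincreasing on [m, ∞) for some mode m ∈ ℝ, and suppose X has mean μ and finite, non-zero variance σ². Then P(|X − μ| ≥ √(80/9)·σ) ≤ 1/20, i.e., a two-tailed deviation of at least √(80/9) ≈ 2.981 standard deviations from the mean has probability at most 0.05. -/
open MeasureTheory ProbabilityTheory Real

/-!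
The superlevel sets of a unimodal density are intervals containing the mode `m`, so by the
layer-cake formula the law is a mixture of uniform laws on such intervals (Khintchine). Hence
`∫ h dρ ≤ 0` as soon as `∫ h ≤ 0` over every interval `[m, b]` and `[a, m]`. With a quadratic
`h` this gives the Johnson–Rogers bound `(m - μ)² ≤ 3σ²`. With `h = 1_{|x - μ| ≥ r} - q` for the
quadratic `q(x) = ((x - μ)² - (m - μ)²/4) / (20σ² - 5(m - μ)²)`, whose expectation is `1/20`,
the interval conditions reduce to a cubic inequality in `x - μ`, which holds for `r² = 80σ²/9`
because `(m - μ)² ≤ 3σ²`.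
-/

open Set
open scoped ENNReal

structure IsUnimodal {α β : Type*} [Preorder α] [Preorder β] (f : α → β) (m : α) : Prop where
  monotoneOn : MonotoneOn f (Iic m)
  antitoneOn : AntitoneOn f (Ici m)

namespace IsUnimodal

variable {α β : Type*} [LinearOrder α] {f : α → β} {m : α}

theorem apply_le_apply_mode [Preorder β] (hf : IsUnimodal f m) (x : α) : f x ≤ f m := by
  rcases le_total x m with hx | hx
  · exact hf.monotoneOn hx self_mem_Iic hx
  · exact hf.antitoneOn self_mem_Ici hx hx

theorem max_const [LinearOrder β] (hf : IsUnimodal f m) (c : β) :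
    IsUnimodal (fun x => max (f x) c) m :=
  ⟨fun _ hx _ hy hxy => max_le_max_right c (hf.monotoneOn hx hy hxy),
    fun _ hx _ hy hxy => max_le_max_right c (hf.antitoneOn hx hy hxy)⟩

theorem ordConnected_preimage_Ioi [Preorder β] (hf : IsUnimodal f m) (s : β) :
    (f ⁻¹' Ioi s).OrdConnected := by
  refine ⟨fun x hx y hy z ⟨hxz, hzy⟩ => ?_⟩
  rcases le_total z m with hz | hz
  · exact lt_of_lt_of_le hx (hf.monotoneOn (hxz.trans hz) hz hxz)
  · exact lt_of_lt_of_le hy (hf.antitoneOn hz (hz.trans hzy) hzy)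

theorem measurable [TopologicalSpace α] [OrderClosedTopology α] [MeasurableSpace α] [BorelSpace α]
    [LinearOrder β] [TopologicalSpace β] [OrderTopology β] [SecondCountableTopology β]
    [MeasurableSpace β] [BorelSpace β] (hf : IsUnimodal f m) : Measurable f :=
  measurable_of_Ioi fun s => (hf.ordConnected_preimage_Ioi s).measurableSet

end IsUnimodal

theorem MeasureTheory.LocallyIntegrable.intervalIntegrable {E : Type*} [NormedAddCommGroup E]
    {f : ℝ → E} {μ : Measure ℝ} (hf : LocallyIntegrable f μ) (a b : ℝ) :
    IntervalIntegrable f μ a b :=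
  (hf.integrableOn_isCompact isCompact_uIcc).intervalIntegrable

namespace Set.OrdConnected

variable {E : Set ℝ}

theorem bddBelow_bddAbove_of_volume_ne_top (hE : E.OrdConnected)
    (hfin : volume E ≠ ∞) : BddBelow E ∧ BddAbove E := by
  constructor
  · by_contra hE'
    obtain ⟨e, he⟩ := nonempty_of_not_bddBelow hE'
    have : Iic e ⊆ E := fun y hy => by
      obtain ⟨z, hz, hzy⟩ := not_bddBelow_iff.mp hE' y
      exact hE.out hz he ⟨hzy.le, hy⟩
    exact hfin (top_le_iff.mp (volume_Iic (a := e) ▸ measure_mono this))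
  · by_contra hE'
    obtain ⟨e, he⟩ := nonempty_of_not_bddAbove hE'
    have : Ici e ⊆ E := fun y hy => by
      obtain ⟨z, hz, hzy⟩ := not_bddAbove_iff.mp hE' y
      exact hE.out he hz ⟨hy, hzy.le⟩
    exact hfin (top_le_iff.mp (volume_Ici (a := e) ▸ measure_mono this))

theorem ae_eq_Icc_csInf_csSup (hE : E.OrdConnected) (hne : E.Nonempty)
    (hfin : volume E ≠ ∞) : E =ᵐ[volume] Icc (sInf E) (sSup E) := by
  obtain ⟨hb, ha⟩ := hE.bddBelow_bddAbove_of_volume_ne_top hfin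
  refine ae_eq_of_subset_of_measure_ge (subset_Icc_csInf_csSup hb ha) ?_
    hE.measurableSet.nullMeasurableSet measure_Icc_lt_top.ne
  have hIoo : Ioo (sInf E) (sSup E) ⊆ E :=
    IsConnected.Ioo_csInf_csSup_subset ⟨hne, isPreconnected_iff_ordConnected.2 hE⟩ hb ha
  calc volume (Icc (sInf E) (sSup E)) = volume (Ioo (sInf E) (sSup E)) := by
        rw [Real.volume_Icc, Real.volume_Ioo]
    _ ≤ volume E := measure_mono hIoo

theorem setIntegral_nonpos {h : ℝ → ℝ} {m : ℝ}
    (hE : E.OrdConnected) (hm : m ∈ E) (hfin : volume E ≠ ∞) (hh : LocallyIntegrable h)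
    (hR : ∀ b, m ≤ b → ∫ x in m..b, h x ≤ 0) (hL : ∀ a, a ≤ m → ∫ x in a..m, h x ≤ 0) :
    ∫ x in E, h x ≤ 0 := by
  obtain ⟨hb, ha⟩ := hE.bddBelow_bddAbove_of_volume_ne_top hfin
  have ham : sInf E ≤ m := csInf_le hb hm
  have hmb : m ≤ sSup E := le_csSup ha hm
  calc ∫ x in E, h x = ∫ x in Icc (sInf E) (sSup E), h x :=
        setIntegral_congr_set (hE.ae_eq_Icc_csInf_csSup ⟨m, hm⟩ hfin)
    _ = ∫ x in sInf E..sSup E, h x := by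
        rw [integral_Icc_eq_integral_Ioc, intervalIntegral.integral_of_le (ham.trans hmb)]
    _ = (∫ x in sInf E..m, h x) + ∫ x in m..sSup E, h x :=
        (intervalIntegral.integral_add_adjacent_intervals (hh.intervalIntegrable _ _)
          (hh.intervalIntegrable _ _)).symm
    _ ≤ 0 := add_nonpos (hL _ ham) (hR _ hmb)

end Set.OrdConnected

theorem integral_mul_eq_integral_setIntegral_lt {α : Type*} [MeasurableSpace α] {μ : Measure α}
    [SFinite μ] {g h : α → ℝ} (hg0 : 0 ≤ g) (hg : Measurable g) (hh : AEStronglyMeasurable h μ)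
    (hgh : Integrable (fun x => g x * h x) μ) :
    ∫ x, g x * h x ∂μ = ∫ s in Ioi 0, ∫ x in {x | s < g x}, h x ∂μ := by
  have hsection : ∀ (t c : ℝ), 0 ≤ t → ∫ s in Ioi 0, (Iio t).indicator (fun _ => c) s = t * c := by
    intro t c ht
    rw [setIntegral_indicator measurableSet_Iio, setIntegral_const, Ioi_inter_Iio,
      Real.volume_real_Ioo_of_le ht, sub_zero, smul_eq_mul]
  set F : α → ℝ → ℝ := fun x s => (Iio (g x)).indicator (fun _ => h x) s
  have hF : Integrable (Function.uncurry F) (μ.prod (volume.restrict (Ioi 0))) := by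
    have hmeas : AEStronglyMeasurable (Function.uncurry F) (μ.prod (volume.restrict (Ioi 0))) :=
      (hh.comp_fst.indicator (measurableSet_lt measurable_snd (hg.comp measurable_fst)) :)
    refine (integrable_prod_iff hmeas).2 ⟨ae_of_all _ fun x => ?_, ?_⟩
    · refine (integrable_indicator_iff (measurableSet_Iio (a := g x))).2
        (integrableOn_const (C := h x) ?_)
      rw [Measure.restrict_apply measurableSet_Iio, Iio_inter_Ioi]
      exact measure_Ioo_lt_top.ne
    · refine hgh.norm.congr (ae_of_all _ fun x => ?_)
      simp only [F, Function.uncurry_apply_pair, norm_indicator_eq_indicator_norm]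
      rw [hsection _ _ (hg0 x), norm_mul, Real.norm_of_nonneg (hg0 x)]
  calc ∫ x, g x * h x ∂μ = ∫ x, (∫ s in Ioi 0, F x s) ∂μ :=
        integral_congr_ae (ae_of_all _ fun x => (hsection _ _ (hg0 x)).symm)
    _ = ∫ s in Ioi 0, ∫ x, F x s ∂μ := integral_integral_swap hF
    _ = ∫ s in Ioi 0, ∫ x in {x | s < g x}, h x ∂μ := by
        congr 1; funext s
        rw [← integral_indicator (measurableSet_lt measurable_const hg)]
        rfl

theorem IsUnimodal.integral_mul_nonpos {g h : ℝ → ℝ} {m : ℝ} (hg : IsUnimodal g m) (hg0 : 0 ≤ g)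
    (hgi : Integrable g) (hh : LocallyIntegrable h) (hgh : Integrable fun x => g x * h x)
    (hR : ∀ b, m ≤ b → ∫ x in m..b, h x ≤ 0) (hL : ∀ a, a ≤ m → ∫ x in a..m, h x ≤ 0) :
    ∫ x, g x * h x ≤ 0 := by
  rw [integral_mul_eq_integral_setIntegral_lt hg0 hg.measurable hh.aestronglyMeasurable hgh]
  refine setIntegral_nonpos measurableSet_Ioi fun s (hs : 0 < s) => ?_
  rcases eq_empty_or_nonempty {x | s < g x} with hE | ⟨e, he⟩
  · simp [hE]
  have hfin : volume {x | s < g x} ≠ ∞ :=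
    ne_top_of_le_ne_top (hgi.measure_norm_ge_lt_top hs).ne
      (measure_mono fun x (hx : s < g x) => hx.le.trans (le_abs_self _))
  exact (hg.ordConnected_preimage_Ioi s).setIntegral_nonpos
    (lt_of_lt_of_le he (hg.apply_le_apply_mode e)) hfin hh hR hL

theorem IsUnimodal.integral_nonpos_of_withDensity {f h : ℝ → ℝ} {m : ℝ} {ρ : Measure ℝ}
    (hf : IsUnimodal f m) (hρ : ρ = volume.withDensity fun x => ENNReal.ofReal (f x))
    [IsFiniteMeasure ρ] (hh : LocallyIntegrable h) (hhρ : Integrable h ρ)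
    (hR : ∀ b, m ≤ b → ∫ x in m..b, h x ≤ 0) (hL : ∀ a, a ≤ m → ∫ x in a..m, h x ≤ 0) :
    ∫ x, h x ∂ρ ≤ 0 := by
  subst hρ
  have hd : Measurable fun x => ENNReal.ofReal (f x) :=
    ENNReal.measurable_ofReal.comp hf.measurable
  have hd_lt : ∀ᵐ x, ENNReal.ofReal (f x) < ∞ := ae_of_all _ fun _ => ENNReal.ofReal_lt_top
  have hg : IsUnimodal (fun x => (ENNReal.ofReal (f x)).toReal) m := by
    simpa only [ENNReal.toReal_ofReal'] using hf.max_const 0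
  have hgi : Integrable fun x => (ENNReal.ofReal (f x)).toReal := by
    simpa using (integrable_withDensity_iff_integrable_smul' hd hd_lt).1 (integrable_const (1 : ℝ))
  rw [integrable_withDensity_iff_integrable_smul' hd hd_lt] at hhρ
  rw [integral_withDensity_eq_integral_toReal_smul hd hd_lt]
  exact hg.integral_mul_nonpos (fun _ => ENNReal.toReal_nonneg) hgi hh hhρ hR hL

theorem intervalIntegral_quadratic (A B C μ a b : ℝ) :
    ∫ x in a..b, A * (x - μ) ^ 2 + B * (x - μ) + C =
      A * ((b - μ) ^ 3 - (a - μ) ^ 3) / 3 + B * ((b - μ) ^ 2 - (a - μ) ^ 2) / 2 + C * (b - a) := by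
  have hint : ∀ F : ℝ → ℝ, Continuous F → IntervalIntegrable F volume (a - μ) (b - μ) :=
    fun F hF => hF.intervalIntegrable _ _
  rw [intervalIntegral.integral_comp_sub_right (fun y => A * y ^ 2 + B * y + C),
    intervalIntegral.integral_add (hint _ (by fun_prop)) (hint _ (by fun_prop)),
    intervalIntegral.integral_add (hint _ (by fun_prop)) (hint _ (by fun_prop)),
    intervalIntegral.integral_const_mul, intervalIntegral.integral_const_mul, integral_pow,
    integral_id, intervalIntegral.integral_const, smul_eq_mul]
  ring

section Moments

variable {ρ : Measure ℝ} [IsProbabilityMeasure ρ] {μ σ : ℝ}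

theorem integrable_quadratic (h2 : MemLp id 2 ρ) (A B C : ℝ) :
    Integrable (fun x => A * (x - μ) ^ 2 + B * (x - μ) + C) ρ := by
  have h2' : MemLp (fun x => x - μ) 2 ρ := h2.sub (memLp_const μ)
  exact (((h2'.integrable_sq).const_mul A).add ((h2'.integrable one_le_two).const_mul B)).add
    (integrable_const C)

theorem integral_quadratic (h2 : MemLp id 2 ρ) (hmean : ∫ x, x ∂ρ = μ)
    (hvar : ∫ x, (x - μ) ^ 2 ∂ρ = σ ^ 2) (A B C : ℝ) :
    ∫ x, A * (x - μ) ^ 2 + B * (x - μ) + C ∂ρ = A * σ ^ 2 + C := by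
  have h2' : MemLp (fun x => x - μ) 2 ρ := h2.sub (memLp_const μ)
  have h1 : Integrable (fun x => x - μ) ρ := h2'.integrable one_le_two
  have hcentered : ∫ x, x - μ ∂ρ = 0 := by
    have hX : Integrable (fun x => x) ρ := h2.integrable one_le_two
    rw [integral_sub hX (integrable_const μ), hmean]
    simp
  have hA : Integrable (fun x => A * (x - μ) ^ 2) ρ := h2'.integrable_sq.const_mul A
  have hB : Integrable (fun x => B * (x - μ)) ρ := h1.const_mul B
  have hAB : Integrable (fun x => A * (x - μ) ^ 2 + B * (x - μ)) ρ := hA.add hB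
  rw [integral_add hAB (integrable_const C), integral_add hA hB, integral_const_mul,
    integral_const_mul, hvar, hcentered]
  simp

end Moments

theorem intervalIntegral_indicator_one_le {s : Set ℝ} (hs : MeasurableSet s) {a b c d : ℝ}
    (hab : a ≤ b) (hsub : Ioc a b ∩ s ⊆ Icc c d) :
    ∫ x in a..b, s.indicator 1 x ≤ max (d - c) 0 := by
  rw [intervalIntegral.integral_of_le hab, integral_indicator_one hs,
    measureReal_restrict_apply hs, inter_comm, ← Real.volume_real_Icc]
  exact measureReal_mono hsub measure_Icc_lt_top.ne

theorem intervalIntegral_indicator_abs_sub_ge_le_right {μ r m b : ℝ} (hm : μ - r < m)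
    (hb : m ≤ b) : ∫ x in m..b, {x | r ≤ |x - μ|}.indicator 1 x ≤ max (b - μ - r) 0 := by
  have hsub : Ioc m b ∩ {x | r ≤ |x - μ|} ⊆ Icc (μ + r) b := by
    rintro x ⟨⟨hmx, hxb⟩, hx : r ≤ |x - μ|⟩
    rcases le_abs'.1 hx with h | h
    · linarith
    · exact ⟨by linarith, hxb⟩
  simpa [sub_add_eq_sub_sub] using
    intervalIntegral_indicator_one_le (measurableSet_le measurable_const (by fun_prop)) hb hsub

theorem intervalIntegral_indicator_abs_sub_ge_le_left {μ r m a : ℝ} (hm : m < μ + r)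
    (ha : a ≤ m) : ∫ x in a..m, {x | r ≤ |x - μ|}.indicator 1 x ≤ max (μ - a - r) 0 := by
  have hsub : Ioc a m ∩ {x | r ≤ |x - μ|} ⊆ Icc a (μ - r) := by
    rintro x ⟨⟨hax, hxm⟩, hx : r ≤ |x - μ|⟩
    rcases le_abs'.1 hx with h | h
    · exact ⟨hax.le, by linarith⟩
    · linarith
  simpa [sub_sub_eq_add_sub, sub_right_comm] using
    intervalIntegral_indicator_one_le (measurableSet_le measurable_const (by fun_prop)) ha hsub

theorem mul_max_sub_zero_le_sub_mul_sq {r n u : ℝ} (hr : 0 < r) (hn : 80 * n ^ 2 ≤ 27 * r ^ 2) (hu : n ≤ u) :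
    3 * (9 * r ^ 2 - 20 * n ^ 2) * max (u - r) 0 ≤ (u - n) * (2 * u + n) ^ 2 := by
  rcases le_total u r with hur | hru
  · rw [max_eq_right (sub_nonpos.2 hur), mul_zero]
    exact mul_nonneg (sub_nonneg.2 hu) (sq_nonneg _)
  rw [max_eq_left (sub_nonneg.2 hru)]
  have hnr : n ≤ 3 / 5 * r := by nlinarith [sq_nonneg (n - 3 / 5 * r)]
  have hn3 : n ^ 3 ≤ 3 / 5 * r * n ^ 2 := by
    nlinarith [mul_nonneg (sq_nonneg n) (sub_nonneg.2 hnr)]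
  -- the difference of the two sides is `4 (u - 3r/2)² (u + 3r) + n² (57u - 60r) - n³`
  nlinarith [mul_nonneg (sq_nonneg n) (sub_nonneg.2 hru),
    mul_nonneg (sub_nonneg.2 hru) (sq_nonneg (u - 3 * r / 2)), mul_pos (mul_pos hr hr) hr]

namespace IsUnimodal

variable {f : ℝ → ℝ} {m μ σ : ℝ} {ρ : Measure ℝ}

theorem measureReal_le_integral_of_withDensity [IsFiniteMeasure ρ] (hf : IsUnimodal f m)
    (hρ : ρ = volume.withDensity fun x => ENNReal.ofReal (f x)) {S : Set ℝ} (hS : MeasurableSet S)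
    {q : ℝ → ℝ} (hq : LocallyIntegrable q) (hqρ : Integrable q ρ)
    (hR : ∀ b, m ≤ b → ∫ x in m..b, S.indicator 1 x ≤ ∫ x in m..b, q x)
    (hL : ∀ a, a ≤ m → ∫ x in a..m, S.indicator 1 x ≤ ∫ x in a..m, q x) :
    ρ.real S ≤ ∫ x, q x ∂ρ := by
  have hφ : LocallyIntegrable (S.indicator (1 : ℝ → ℝ)) := (locallyIntegrable_const 1).indicator hS
  have hφρ : Integrable (S.indicator (1 : ℝ → ℝ)) ρ := (integrable_const (1 : ℝ)).indicator hS
  have key := hf.integral_nonpos_of_withDensity hρ (h := fun x => S.indicator 1 x - q x)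
    (hφ.sub hq) (hφρ.sub hqρ)
    (fun b hb => by
      rw [intervalIntegral.integral_sub (hφ.intervalIntegrable m b) (hq.intervalIntegrable m b)]
      exact sub_nonpos.2 (hR b hb))
    (fun a ha => by
      rw [intervalIntegral.integral_sub (hφ.intervalIntegrable a m) (hq.intervalIntegrable a m)]
      exact sub_nonpos.2 (hL a ha))
  rw [integral_sub hφρ hqρ, integral_indicator_one hS] at key
  linarith

variable [IsProbabilityMeasure ρ]

theorem sq_mode_sub_mean_le (hf : IsUnimodal f m)
    (hρ : ρ = volume.withDensity fun x => ENNReal.ofReal (f x)) (h2 : MemLp id 2 ρ)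
    (hmean : ∫ x, x ∂ρ = μ) (hvar : ∫ x, (x - μ) ^ 2 ∂ρ = σ ^ 2) :
    (m - μ) ^ 2 ≤ 3 * σ ^ 2 := by
  set n := m - μ
  have key := hf.integral_nonpos_of_withDensity hρ
    (h := fun x => -3 * (x - μ) ^ 2 + (-2 * n) * (x - μ) + n ^ 2)
    (Continuous.locallyIntegrable (by fun_prop)) (integrable_quadratic h2 _ _ _) ?_ ?_
  · rw [integral_quadratic h2 hmean hvar] at key
    linarith
  · intro b hb
    rw [intervalIntegral_quadratic]
    nlinarith [mul_nonneg (sub_nonneg.2 hb) (sq_nonneg (b - μ + n))]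
  · intro a ha
    rw [intervalIntegral_quadratic]
    nlinarith [mul_nonneg (sub_nonneg.2 ha) (sq_nonneg (a - μ + n))]

theorem measureReal_abs_sub_ge_le (hf : IsUnimodal f m)
    (hρ : ρ = volume.withDensity fun x => ENNReal.ofReal (f x)) (h2 : MemLp id 2 ρ)
    (hmean : ∫ x, x ∂ρ = μ) (hvar : ∫ x, (x - μ) ^ 2 ∂ρ = σ ^ 2) (hσ : 0 < σ) :
    ρ.real {x | √(80 / 9) * σ ≤ |x - μ|} ≤ 1 / 20 := by
  set r := √(80 / 9) * σ
  have hr2 : r ^ 2 = 80 / 9 * σ ^ 2 := by rw [mul_pow, Real.sq_sqrt (by norm_num)]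
  have hr : 0 < r := by positivity
  set n := m - μ
  have hn : n ^ 2 ≤ 3 * σ ^ 2 := hf.sq_mode_sub_mean_le hρ h2 hmean hvar
  have hn80 : 80 * n ^ 2 ≤ 27 * r ^ 2 := by nlinarith
  obtain ⟨hnr_lo, hnr_hi⟩ := abs_lt.1 (abs_lt_of_sq_lt_sq (by nlinarith) hr.le : |n| < r)
  set D := 20 * σ ^ 2 - 5 * n ^ 2
  have hD : 12 * D = 3 * (9 * r ^ 2 - 20 * n ^ 2) := by rw [hr2]; ring
  have hDpos : 0 < D := by nlinarith
  -- In `u = x - μ`, the primitive `(u - n) (2u + n)² / (12 D)` of `q` from the mode has a double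
  -- root at `u = -n/2`, which lets it dominate the tail length `max (|u| - r) 0`.
  set q : ℝ → ℝ := fun x => (1 / D) * (x - μ) ^ 2 + 0 * (x - μ) + -(n ^ 2 / 4) / D
  have hq : ∫ x, q x ∂ρ = 1 / 20 := by
    rw [integral_quadratic h2 hmean hvar]
    field_simp
    ring
  have hq_primitive : ∀ a b, ∫ x in a..b, q x =
      ((b - μ - n) * (2 * (b - μ) + n) ^ 2 - (a - μ - n) * (2 * (a - μ) + n) ^ 2) / (12 * D) := by
    intro a b
    rw [intervalIntegral_quadratic]
    field_simp
    ring
  refine hq ▸ hf.measureReal_le_integral_of_withDensity hρ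
    (measurableSet_le measurable_const (by fun_prop))
    (Continuous.locallyIntegrable (by fun_prop)) (integrable_quadratic h2 _ _ _) ?_ ?_
  · intro b hb
    refine (intervalIntegral_indicator_abs_sub_ge_le_right (by linarith) hb).trans ?_
    rw [hq_primitive, le_div_iff₀ (by positivity), hD]
    nlinarith [mul_max_sub_zero_le_sub_mul_sq hr hn80 (by linarith : n ≤ b - μ)]
  · intro a ha
    refine (intervalIntegral_indicator_abs_sub_ge_le_left (by linarith) ha).trans ?_
    rw [hq_primitive, le_div_iff₀ (by positivity), hD]
    nlinarith [mul_max_sub_zero_le_sub_mul_sq hr (by rwa [neg_sq]) (by linarith : -n ≤ μ - a)]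

end IsUnimodal

/-- For a unimodal random variable `X` (law absolutely continuous with a density nondecreasing
on `(-∞, m]` and nonincreasing on `[m, ∞)`) with mean `μ` and finite non-zero variance `σ²`,
a two-tailed deviation of at least `√(80/9)` standard deviations from the mean has probability
at most `1/20 = 0.05`. -/
theorem vysochanskij_petunin_two_tailed_05
    {Ω : Type*} [MeasurableSpace Ω] (P : Measure Ω) [IsProbabilityMeasure P]
    (X : Ω → ℝ) (hX : Measurable X)
    (f : ℝ → ℝ) (m : ℝ)
    (hlaw : Measure.map X P = volume.withDensity (fun x => ENNReal.ofReal (f x)))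
    (hmono : MonotoneOn f (Set.Iic m)) (hanti : AntitoneOn f (Set.Ici m))
    (μ σ : ℝ) (hμ : μ = ∫ ω, X ω ∂P)
    (hfin : MemLp X 2 P)
    (hσ : σ ^ 2 = ∫ ω, (X ω - μ) ^ 2 ∂P) (hσpos : 0 < σ) :
    (P {ω | Real.sqrt (80 / 9) * σ ≤ |X ω - μ|}).toReal ≤ 1 / 20 := by
  have hXae := hX.aemeasurable (μ := P)
  have : IsProbabilityMeasure (P.map X) := Measure.isProbabilityMeasure_map hXae
  have h2 : MemLp id 2 (P.map X) := (memLp_map_measure_iff aestronglyMeasurable_id hXae).2 hfin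
  have hmean : ∫ x, x ∂(P.map X) = μ := by rw [integral_map hXae (by fun_prop), hμ]
  have hvar : ∫ x, (x - μ) ^ 2 ∂(P.map X) = σ ^ 2 := by
    rw [integral_map hXae (by fun_prop), hσ]
  have hbound := (IsUnimodal.mk hmono hanti).measureReal_abs_sub_ge_le hlaw h2 hmean hvar hσpos
  rwa [map_measureReal_apply hX (measurableSet_le measurable_const (by fun_prop))] at hbound
end

section
/- Let X be a real random variable on a probability space (Ω, P) whose law is absolutely continuous with respect to Lebesgue measure with a density f : ℝ → ℝ that is monotone nondecreasing on (−∞, m] and monotone nonincreasing on [m, ∞) for some mode m ∈ ℝ, and suppose X has mean μ and finite, non-zero variance σ². Then for every real λ > √(8/3), the one-sided tail satisfies P(X − μ ≥ λ·σ) ≤ 4/(9·λ²); in particular P(X − μ ≥ √(40/9)·σ) ≤ 1/10. -/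
/-!
If `h` is a test function on `ℝ` whose integrals taken from the mode outwards, `∫_x^m h` for
`x ≤ m` and `∫_m^x h` for `x ≥ m`, are all nonnegative, then `∫ h f ≥ 0` for every unimodal
density `f` with mode `m`: by the layer-cake formula `f = ∫_0^∞ 𝟙[s < f] ds`, and every superlevel
set `{s < f}` is, up to its endpoints, an interval through `m`, over which `∫ h` splits into two
outward integrals.

Apply this to `h x = q (x - μ) - 𝟙[r ≤ x - μ]` with `q y = a y² + b y + c`, whose expectation is
`a σ² + c - P(X - μ ≥ r)`. The outward condition says that the antiderivative of `h`, a cubic minus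
the ramp `max (y - r) 0`, lies below its value at `ν = m - μ` to the left of `ν` and above it to the
right. According to whether `ν ≤ 0`, `0 < ν ≤ r` or `r < ν`, an explicit quadratic achieves this
with `a σ² + c ≤ 4 σ² / (9 r²)` as soon as `8 σ² ≤ 3 r²`, i.e. `λ² ≥ 8/3` for `r = λ σ`.
-/

open MeasureTheory Set
open scoped ENNReal

section Unimodal

variable {α β : Type*} [LinearOrder α] [LinearOrder β] {f : α → β} {m : α}

theorem apply_le_apply_of_unimodal (hmono : MonotoneOn f (Iic m)) (hanti : AntitoneOn f (Ici m))
    (y : α) : f y ≤ f m := by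
  rcases le_total y m with hym | hmy
  · exact hmono hym self_mem_Iic hym
  · exact hanti self_mem_Ici hmy hmy

theorem ordConnected_setOf_lt_of_unimodal (hmono : MonotoneOn f (Iic m))
    (hanti : AntitoneOn f (Ici m)) (s : β) : OrdConnected {y | s < f y} := by
  refine ⟨fun y₁ h₁ y₂ h₂ y hy => ?_⟩
  rcases le_total y m with hym | hmy
  · exact h₁.trans_le (hmono (hy.1.trans hym) hym hy.1)
  · exact h₂.trans_le (hanti hmy (hmy.trans hy.2) hy.2)

end Unimodal

theorem measurable_of_unimodal {f : ℝ → ℝ} {m : ℝ} (hmono : MonotoneOn f (Iic m))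
    (hanti : AntitoneOn f (Ici m)) : Measurable f :=
  measurable_of_Ioi fun s => (ordConnected_setOf_lt_of_unimodal hmono hanti s).measurableSet

theorem Set.OrdConnected.abs_sub_le_toReal_volume {E : Set ℝ} (hE : E.OrdConnected)
    (hfin : volume E ≠ ∞) {x y : ℝ} (hx : x ∈ E) (hy : y ∈ E) : |y - x| ≤ (volume E).toReal := by
  rw [← ENNReal.ofReal_le_iff_le_toReal hfin, ← Real.volume_interval]
  exact measure_mono (hE.uIcc_subset hx hy)

theorem setIntegral_nonneg_of_ordConnected {E : Set ℝ} {m : ℝ} {h : ℝ → ℝ}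
    (hE : E.OrdConnected) (hm : m ∈ E) (hfin : volume E ≠ ∞) (hloc : LocallyIntegrable h)
    (hleft : ∀ x ≤ m, 0 ≤ ∫ t in x..m, h t) (hright : ∀ x, m ≤ x → 0 ≤ ∫ t in m..x, h t) :
    0 ≤ ∫ y in E, h y := by
  have hbound := fun y (hy : y ∈ E) => abs_le.1 (hE.abs_sub_le_toReal_volume hfin hm hy)
  have hbddB : BddBelow E := ⟨m - (volume E).toReal, fun y hy => by linarith [hbound y hy]⟩
  have hbddA : BddAbove E := ⟨m + (volume E).toReal, fun y hy => by linarith [hbound y hy]⟩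
  set A := sInf E
  set B := sSup E
  have hAm : A ≤ m := csInf_le hbddB hm
  have hmB : m ≤ B := le_csSup hbddA hm
  have hIoo : Ioo A B ⊆ E :=
    IsConnected.Ioo_csInf_csSup_subset ⟨⟨m, hm⟩, hE.isPreconnected⟩ hbddB hbddA
  have hae : Ioo A B =ᵐ[volume] E := by
    refine ae_eq_of_subset_of_measure_ge hIoo ?_ measurableSet_Ioo.nullMeasurableSet hfin
    rw [Real.volume_Ioo, ← Real.volume_Icc]
    exact measure_mono (subset_Icc_csInf_csSup hbddB hbddA)
  have hint : ∀ u v, IntervalIntegrable h volume u v := fun u v =>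
    (hloc.integrableOn_isCompact isCompact_uIcc).intervalIntegrable
  calc 0 ≤ (∫ t in A..m, h t) + ∫ t in m..B, h t := add_nonneg (hleft A hAm) (hright B hmB)
    _ = ∫ t in Ioo A B, h t := by
      rw [intervalIntegral.integral_add_adjacent_intervals (hint A m) (hint m B),
        intervalIntegral.integral_of_le (hAm.trans hmB), integral_Ioc_eq_integral_Ioo]
    _ = ∫ t in E, h t := setIntegral_congr_set hae

theorem integral_withDensity_eq_integral_setIntegral_lt {α : Type*} [MeasurableSpace α]
    {μ : Measure α} [SFinite μ] {f h : α → ℝ} (hf : Measurable f) (hh : Measurable h)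
    (hint : Integrable h (μ.withDensity fun x => ENNReal.ofReal (f x))) :
    ∫ x, h x ∂(μ.withDensity fun x => ENNReal.ofReal (f x))
      = ∫ s in Ioi 0, ∫ x in {x | s < f x}, h x ∂μ := by
  have hIoo (t c : ℝ) : ∫ s, (Ioo 0 t).indicator (fun _ => c) s = t.toNNReal • c := by
    rw [integral_indicator_const _ measurableSet_Ioo, Real.volume_real_Ioo, sub_zero,
      NNReal.smul_def, Real.coe_toNNReal']
  set S : Set (α × ℝ) := {p | p.2 ∈ Ioo 0 (f p.1)}
  have hS : MeasurableSet S := (measurable_snd measurableSet_Ioi).inter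
    (measurableSet_lt measurable_snd (hf.comp measurable_fst))
  set H : α × ℝ → ℝ := S.indicator fun p => h p.1
  have hfiber (x : α) : (fun s => H (x, s)) = (Ioo 0 (f x)).indicator fun _ => h x := rfl
  have hw : Measurable fun x => (f x).toNNReal := hf.real_toNNReal
  have hsmul : Integrable (fun x => (f x).toNNReal • h x) μ :=
    (integrable_withDensity_iff_integrable_smul hw).1 hint
  have hH : Integrable (Function.uncurry fun x s => H (x, s)) (μ.prod volume) := by
    refine (integrable_prod_iff ((hh.comp measurable_fst).indicator hS).aestronglyMeasurable).2
      ⟨.of_forall fun x => ?_, hsmul.norm.congr (.of_forall fun x => ?_)⟩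
    · change Integrable (fun s => H (x, s)) volume
      rw [hfiber]
      exact (integrableOn_const measure_Ioo_lt_top.ne).integrable_indicator measurableSet_Ioo
    · change ‖(f x).toNNReal • h x‖ = ∫ s, ‖H (x, s)‖
      simp only [H, norm_indicator_eq_indicator_norm]
      rw [show (fun s => S.indicator (fun p => ‖h p.1‖) (x, s))
        = (Ioo 0 (f x)).indicator fun _ => ‖h x‖ from rfl, hIoo, NNReal.smul_def, NNReal.smul_def,
        smul_eq_mul, smul_eq_mul, norm_mul, Real.norm_of_nonneg (NNReal.coe_nonneg _)]
  calc ∫ x, h x ∂(μ.withDensity fun x => ENNReal.ofReal (f x))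
      = ∫ x, (f x).toNNReal • h x ∂μ := integral_withDensity_eq_integral_smul hw h
    _ = ∫ x, (∫ s, H (x, s)) ∂μ := by simp only [hfiber, hIoo]
    _ = ∫ s, ∫ x, H (x, s) ∂μ := integral_integral_swap hH
    _ = ∫ s in Ioi 0, ∫ x in {x | s < f x}, h x ∂μ := by
      rw [← integral_indicator measurableSet_Ioi]
      congr 1 with s
      by_cases hs : 0 < s
      · rw [indicator_of_mem (mem_Ioi.2 hs),
          ← integral_indicator (measurableSet_lt measurable_const hf)]
        congr 1 with x
        by_cases hx : s < f x <;> simp [H, S, indicator, hs, hx]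
      · rw [indicator_of_notMem (show s ∉ Ioi 0 from hs)]
        exact integral_eq_zero_of_ae
          (.of_forall fun x => indicator_of_notMem (fun hp => hs hp.1) _)

theorem volume_setOf_lt_ne_top {f : ℝ → ℝ} (hf : Measurable f)
    [IsFiniteMeasure (volume.withDensity fun x => ENNReal.ofReal (f x))] {s : ℝ} (hs : 0 < s) :
    volume {x | s < f x} ≠ ∞ := by
  have hE : MeasurableSet {x | s < f x} := measurableSet_lt measurable_const hf
  have hmarkov : ENNReal.ofReal s * volume {x | s < f x}
      ≤ (volume.withDensity fun x => ENNReal.ofReal (f x)) {x | s < f x} := by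
    rw [withDensity_apply _ hE, ← setLIntegral_const]
    exact setLIntegral_mono' hE fun x hx => ENNReal.ofReal_le_ofReal hx.le
  intro htop
  rw [htop, ENNReal.mul_top (ENNReal.ofReal_pos.2 hs).ne'] at hmarkov
  exact measure_ne_top _ _ (top_le_iff.1 hmarkov)

theorem integral_withDensity_nonneg_of_unimodal {f h : ℝ → ℝ} {m : ℝ}
    (hmono : MonotoneOn f (Iic m)) (hanti : AntitoneOn f (Ici m))
    [IsFiniteMeasure (volume.withDensity fun x => ENNReal.ofReal (f x))]
    (hh : Measurable h) (hint : Integrable h (volume.withDensity fun x => ENNReal.ofReal (f x)))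
    (hloc : LocallyIntegrable h)
    (hleft : ∀ x ≤ m, 0 ≤ ∫ t in x..m, h t) (hright : ∀ x, m ≤ x → 0 ≤ ∫ t in m..x, h t) :
    0 ≤ ∫ x, h x ∂(volume.withDensity fun x => ENNReal.ofReal (f x)) := by
  have hf := measurable_of_unimodal hmono hanti
  rw [integral_withDensity_eq_integral_setIntegral_lt hf hh hint]
  refine setIntegral_nonneg measurableSet_Ioi fun s hs => ?_
  rcases {x | s < f x}.eq_empty_or_nonempty with hE | ⟨y, hy⟩
  · simp [hE]
  · exact setIntegral_nonneg_of_ordConnected (ordConnected_setOf_lt_of_unimodal hmono hanti s)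
      (hy.trans_le (apply_le_apply_of_unimodal hmono hanti y)) (volume_setOf_lt_ne_top hf hs)
      hloc hleft hright

noncomputable def tailTest (a b c r t : ℝ) : ℝ := a * t ^ 2 + b * t + c - (Ici r).indicator 1 t

noncomputable def tailPotential (a b c r t : ℝ) : ℝ :=
  a * t ^ 3 / 3 + b * t ^ 2 / 2 + c * t - max (t - r) 0

theorem hasDerivWithinAt_max_sub_zero_Ioi (r t : ℝ) :
    HasDerivWithinAt (fun y => max (y - r) 0) ((Ici r).indicator 1 t) (Ioi t) t := by
  by_cases ht : r ≤ t
  · rw [indicator_of_mem (mem_Ici.2 ht), Pi.one_apply]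
    exact ((hasDerivWithinAt_id t _).sub_const r).congr
      (fun y hy => max_eq_left (by linarith [mem_Ioi.1 hy])) (max_eq_left (by linarith))
  · rw [indicator_of_notMem (show t ∉ Ici r from ht)]
    refine ((hasDerivAt_const t (0 : ℝ)).congr_of_eventuallyEq ?_).hasDerivWithinAt
    exact Filter.mem_of_superset (Iio_mem_nhds (not_le.1 ht)) fun y hy =>
      max_eq_right (by linarith [mem_Iio.1 hy])

theorem hasDerivWithinAt_tailPotential (a b c r t : ℝ) :
    HasDerivWithinAt (tailPotential a b c r) (tailTest a b c r t) (Ioi t) t := by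
  have hpoly : HasDerivAt (fun y => a * y ^ 3 / 3 + b * y ^ 2 / 2 + c * y)
      (a * t ^ 2 + b * t + c) t := by
    refine ((((hasDerivAt_pow 3 t).const_mul a).div_const 3).fun_add
      (((hasDerivAt_pow 2 t).const_mul b).div_const 2)).fun_add
      ((hasDerivAt_id' t).const_mul c) |>.congr_deriv ?_
    norm_num
    ring
  exact hpoly.hasDerivWithinAt.sub (hasDerivWithinAt_max_sub_zero_Ioi r t)

theorem measurable_tailTest (a b c r : ℝ) : Measurable (tailTest a b c r) :=
  (by fun_prop : Measurable fun t : ℝ => a * t ^ 2 + b * t + c).sub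
    (measurable_const.indicator measurableSet_Ici)

theorem locallyIntegrable_tailTest_comp_sub (a b c r μ : ℝ) :
    LocallyIntegrable fun x => tailTest a b c r (x - μ) :=
  (Continuous.locallyIntegrable (by fun_prop)).sub
    ((locallyIntegrable_const (1 : ℝ)).indicator
      (measurableSet_Ici.preimage (measurable_sub_const μ)))

theorem integral_tailTest (a b c r u v : ℝ) :
    ∫ t in u..v, tailTest a b c r t = tailPotential a b c r v - tailPotential a b c r u := by
  have hloc : LocallyIntegrable (tailTest a b c r) := by
    simpa using locallyIntegrable_tailTest_comp_sub a b c r 0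
  exact intervalIntegral.integral_eq_sub_of_hasDeriv_right
    (Continuous.continuousOn (by unfold tailPotential; fun_prop))
    (fun t _ => hasDerivWithinAt_tailPotential a b c r t)
    (hloc.integrableOn_isCompact isCompact_uIcc).intervalIntegrable

def CrossesUpAt (Φ : ℝ → ℝ) (ν : ℝ) : Prop :=
  (∀ y ≤ ν, Φ y ≤ Φ ν) ∧ ∀ z, ν ≤ z → Φ ν ≤ Φ z

theorem integral_tailTest_comp_sub_nonneg {f : ℝ → ℝ} {m μ a b c r : ℝ}
    (hmono : MonotoneOn f (Iic m)) (hanti : AntitoneOn f (Ici m))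
    [IsFiniteMeasure (volume.withDensity fun x => ENNReal.ofReal (f x))]
    (hint : Integrable (fun x => tailTest a b c r (x - μ))
      (volume.withDensity fun x => ENNReal.ofReal (f x)))
    (hΦ : CrossesUpAt (tailPotential a b c r) (m - μ)) :
    0 ≤ ∫ x, tailTest a b c r (x - μ) ∂(volume.withDensity fun x => ENNReal.ofReal (f x)) := by
  refine integral_withDensity_nonneg_of_unimodal hmono hanti
    ((measurable_tailTest a b c r).comp (measurable_sub_const μ)) hint
    (locallyIntegrable_tailTest_comp_sub a b c r μ) (fun x hx => ?_) (fun x hx => ?_) <;>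
  rw [intervalIntegral.integral_comp_sub_right, integral_tailTest, sub_nonneg]
  · exact hΦ.1 _ (by linarith)
  · exact hΦ.2 _ (by linarith)

section RandomVariable

variable {Ω : Type*} [MeasurableSpace Ω] {P : Measure Ω} [IsProbabilityMeasure P] {X : Ω → ℝ}
  {μ σ : ℝ}

theorem integral_quadratic_sub_mean (hμ : μ = ∫ ω, X ω ∂P) (hfin : MemLp X 2 P)
    (hσ : σ ^ 2 = ∫ ω, (X ω - μ) ^ 2 ∂P) (a b c : ℝ) :
    Integrable (fun ω => a * (X ω - μ) ^ 2 + b * (X ω - μ) + c) P ∧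
      ∫ ω, a * (X ω - μ) ^ 2 + b * (X ω - μ) + c ∂P = a * σ ^ 2 + c := by
  have hY : MemLp (fun ω => X ω - μ) 2 P := hfin.sub (memLp_const μ)
  have hY1 : Integrable (fun ω => X ω - μ) P := hY.integrable one_le_two
  have hY2 : Integrable (fun ω => (X ω - μ) ^ 2) P := hY.integrable_sq
  have hmean : ∫ ω, (X ω - μ) ∂P = 0 := by
    rw [integral_sub (hfin.integrable one_le_two) (integrable_const μ), integral_const,
      probReal_univ, one_smul, ← hμ, sub_self]
  have hlin : Integrable (fun ω => a * (X ω - μ) ^ 2 + b * (X ω - μ)) P :=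
    (hY2.const_mul a).add (hY1.const_mul b)
  refine ⟨hlin.add (integrable_const c), ?_⟩
  rw [integral_add hlin (integrable_const c),
    integral_add (hY2.const_mul a) (hY1.const_mul b), integral_const_mul, integral_const_mul,
    hmean, ← hσ, integral_const, probReal_univ, one_smul]
  ring

theorem tail_le_of_crossesUpAt (hX : Measurable X) {f : ℝ → ℝ} {m : ℝ}
    (hlaw : Measure.map X P = volume.withDensity (fun x => ENNReal.ofReal (f x)))
    (hmono : MonotoneOn f (Iic m)) (hanti : AntitoneOn f (Ici m))
    (hμ : μ = ∫ ω, X ω ∂P) (hfin : MemLp X 2 P) (hσ : σ ^ 2 = ∫ ω, (X ω - μ) ^ 2 ∂P)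
    {a b c r : ℝ} (hΦ : CrossesUpAt (tailPotential a b c r) (m - μ)) :
    (P {ω | r ≤ X ω - μ}).toReal ≤ a * σ ^ 2 + c := by
  have : IsProbabilityMeasure (volume.withDensity fun x => ENNReal.ofReal (f x)) := by
    rw [← hlaw]; exact Measure.isProbabilityMeasure_map hX.aemeasurable
  obtain ⟨hquad, hquad_eq⟩ := integral_quadratic_sub_mean hμ hfin hσ a b c
  have htail : MeasurableSet {ω | r ≤ X ω - μ} :=
    measurableSet_le measurable_const (hX.sub_const μ)
  have hind : Integrable (fun ω => (Ici r).indicator 1 (X ω - μ)) P :=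
    (integrable_const (1 : ℝ)).indicator htail
  have htest_meas : Measurable fun x => tailTest a b c r (x - μ) :=
    (measurable_tailTest a b c r).comp (measurable_sub_const μ)
  have htest : 0 ≤ ∫ ω, tailTest a b c r (X ω - μ) ∂P := by
    rw [← integral_map hX.aemeasurable htest_meas.aestronglyMeasurable, hlaw]
    refine integral_tailTest_comp_sub_nonneg hmono hanti ?_ hΦ
    rw [← hlaw, integrable_map_measure htest_meas.aestronglyMeasurable hX.aemeasurable]
    exact hquad.sub hind
  have hsplit : ∫ ω, tailTest a b c r (X ω - μ) ∂P
      = a * σ ^ 2 + c - (P {ω | r ≤ X ω - μ}).toReal := by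
    unfold tailTest
    rw [integral_sub hquad hind, hquad_eq, ← measureReal_def, ← integral_indicator_one htail]
    rfl
  linarith

end RandomVariable

theorem crossesUpAt_of_monotoneOn_Ici {Φ : ℝ → ℝ} {r ν : ℝ} (hmono : MonotoneOn Φ (Ici r))
    (hle : ∀ y ≤ r, Φ y ≤ Φ r) (hν : r ≤ ν) : CrossesUpAt Φ ν := by
  refine ⟨fun y hy => ?_, fun z hz => hmono hν (hν.trans hz) hz⟩
  rcases le_total y r with hyr | hry
  · exact (hle y hyr).trans (hmono self_mem_Ici hν hν)
  · exact hmono hry hν hy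

theorem crossesUpAt_tailPotential_of_nonpos {r ν : ℝ} (hr : 0 < r) (hν : ν ≤ 0) :
    CrossesUpAt (tailPotential (4 / (9 * r ^ 2)) 0 0 r) ν := by
  have hk : 0 < 4 / (9 * r ^ 2) := by positivity
  unfold CrossesUpAt tailPotential
  refine ⟨fun y hy => ?_, fun z hz => ?_⟩
  · rw [max_eq_right (by linarith), max_eq_right (by linarith)]
    nlinarith [mul_le_mul_of_nonneg_left ((Odd.pow_le_pow (n := 3) (by decide)).2 hy) hk.le]
  · rw [max_eq_right (show ν - r ≤ 0 by linarith)]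
    rcases le_total z r with hzr | hrz
    · rw [max_eq_right (by linarith)]
      nlinarith [mul_le_mul_of_nonneg_left ((Odd.pow_le_pow (n := 3) (by decide)).2 hz) hk.le]
    · rw [max_eq_left (by linarith)]
      have hramp : 27 * r ^ 2 * (z - r) ≤ 4 * z ^ 3 := by
        nlinarith [mul_nonneg (sq_nonneg (2 * z - 3 * r)) (by linarith : (0 : ℝ) ≤ z + 3 * r)]
      have hν3 : ν ^ 3 ≤ 0 := by nlinarith [(Odd.pow_le_pow (n := 3) (by decide)).2 hν]
      field_simp
      nlinarith

theorem ramp_le_cubic {r ν z : ℝ} (hr : 0 < r) (hν : 0 ≤ ν) (hνr : ν ≤ r) (hz : r ≤ z) :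
    (27 * r ^ 2 / 4 - 6 * ν ^ 2) * (z - r) ≤ (z - ν) * (z + ν) ^ 2 := by
  have hQ : 0 ≤ (z - r) ^ 3 + 4 * r * (z - r) ^ 2 + (5 * ν - 7 * r / 4) * r * (z - r)
      + r * (r - ν) * (2 * r + ν) := by
    have ht : 0 ≤ z - r := sub_nonneg.2 hz
    nlinarith [mul_nonneg ht hν, mul_nonneg (mul_nonneg ht hν) hr.le, sq_nonneg (4 * (z - r) - r),
      mul_nonneg hr.le (sq_nonneg (4 * (z - r) - r)),
      mul_nonneg hr.le (mul_nonneg (sub_nonneg.2 hνr) hr.le), mul_nonneg ht (sq_nonneg (z - r)),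
      mul_nonneg (mul_nonneg ht hr.le) (sub_nonneg.2 hνr)]
  have hid : r * ((z - ν) * (z + ν) ^ 2 - (27 * r ^ 2 / 4 - 6 * ν ^ 2) * (z - r))
      = (r - ν) * (z + 3 * r) * (2 * z - 3 * r) ^ 2 / 4 + ν * ((z - r) ^ 3 + 4 * r * (z - r) ^ 2
        + (5 * ν - 7 * r / 4) * r * (z - r) + r * (r - ν) * (2 * r + ν)) := by
    ring
  have hscaled : 0 ≤ r * ((z - ν) * (z + ν) ^ 2 - (27 * r ^ 2 / 4 - 6 * ν ^ 2) * (z - r)) := by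
    rw [hid]
    have hlead : 0 ≤ (r - ν) * (z + 3 * r) * (2 * z - 3 * r) ^ 2 :=
      mul_nonneg (mul_nonneg (by linarith) (by linarith)) (sq_nonneg _)
    exact add_nonneg (div_nonneg hlead zero_le_four) (mul_nonneg hν hQ)
  exact sub_nonneg.1 (nonneg_of_mul_nonneg_right hscaled hr)

theorem crossesUpAt_tailPotential_of_le {r ν K : ℝ} (hν : 0 ≤ ν) (hνr : ν ≤ r) (hK : 0 < K)
    (hKle : K ≤ 27 * r ^ 2 / 4 - 6 * ν ^ 2) :
    CrossesUpAt (tailPotential (3 / K) (2 * ν / K) (-ν ^ 2 / K) r) ν := by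
  have hr : 0 < r := by nlinarith
  have hcubic : ∀ y, tailPotential (3 / K) (2 * ν / K) (-ν ^ 2 / K) r y
      - tailPotential (3 / K) (2 * ν / K) (-ν ^ 2 / K) r ν
      = (y - ν) * (y + ν) ^ 2 / K - max (y - r) 0 := by
    intro y
    unfold tailPotential
    rw [max_eq_right (show ν - r ≤ 0 by linarith)]
    field_simp
    ring
  refine ⟨fun y hy => ?_, fun z hz => ?_⟩
  · have hcube : (y - ν) * (y + ν) ^ 2 / K ≤ 0 := div_nonpos_of_nonpos_of_nonneg
      (mul_nonpos_of_nonpos_of_nonneg (by linarith) (sq_nonneg _)) hK.le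
    linarith [hcubic y, max_eq_right (show y - r ≤ 0 by linarith)]
  · have hramp : max (z - r) 0 ≤ (z - ν) * (z + ν) ^ 2 / K := by
      rw [le_div_iff₀ hK]
      rcases le_total z r with hzr | hrz
      · rw [max_eq_right (by linarith), zero_mul]
        exact mul_nonneg (by linarith) (sq_nonneg _)
      · rw [max_eq_left (by linarith)]
        nlinarith [ramp_le_cubic hr hν hνr hrz, mul_le_mul_of_nonneg_left hKle (sub_nonneg.2 hrz)]
    linarith [hcubic z]

/-- The derivative `16 (y + r/2)² / (27 r²) - 1/3 - 𝟙[r ≤ y]` of this potential vanishes at `y = r`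
and increases after it. -/
theorem monotoneOn_tailPotential_Ici {r : ℝ} (hr : 0 < r) :
    MonotoneOn (tailPotential (16 / (27 * r ^ 2)) (16 / (27 * r)) (-5 / 27) r) (Ici r) := by
  intro u hu v hv huv
  rw [mem_Ici] at hu hv
  unfold tailPotential
  rw [max_eq_left (by linarith), max_eq_left (by linarith)]
  have hslope : 0 ≤ (v - u) * (16 * (v ^ 2 + u * v + u ^ 2) + 24 * r * (u + v) - 96 * r ^ 2) := by
    apply mul_nonneg (by linarith)
    nlinarith [mul_le_mul hu hv hr.le (by linarith)]
  field_simp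
  nlinarith

theorem tailPotential_le_at_threshold {r y : ℝ} (hr : 0 < r) (hy : y ≤ r) :
    tailPotential (16 / (27 * r ^ 2)) (16 / (27 * r)) (-5 / 27) r y
      ≤ tailPotential (16 / (27 * r ^ 2)) (16 / (27 * r)) (-5 / 27) r r := by
  unfold tailPotential
  rw [max_eq_right (by linarith), sub_self, max_self]
  have : 0 ≤ (r - y) * (4 * y + 5 * r) ^ 2 := mul_nonneg (by linarith) (sq_nonneg _)
  field_simp
  nlinarith

theorem exists_crossesUpAt_tailPotential {r σ : ℝ} (hr : 0 < r) (hσ : 8 * σ ^ 2 ≤ 3 * r ^ 2)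
    (ν : ℝ) :
    ∃ a b c, CrossesUpAt (tailPotential a b c r) ν ∧ a * σ ^ 2 + c ≤ 4 * σ ^ 2 / (9 * r ^ 2) := by
  rcases le_or_gt ν 0 with hν0 | hν0
  · exact ⟨_, _, _, crossesUpAt_tailPotential_of_nonpos hr hν0,
      by rw [add_zero, div_mul_eq_mul_div]⟩
  rcases le_or_gt ν r with hνr | hrν
  · -- `27 r² / 4 - 6 ν²` is the least `K` with `(3 σ² - ν²) / K ≤ 4 σ² / (9 r²)` whenever
    -- `8 σ² ≤ 3 r²`.
    have hK : 0 < 27 * r ^ 2 / 4 - 6 * ν ^ 2 := by nlinarith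
    refine ⟨_, _, _, crossesUpAt_tailPotential_of_le hν0.le hνr hK le_rfl, ?_⟩
    rw [div_mul_eq_mul_div, ← add_div, div_le_div_iff₀ hK (by positivity)]
    nlinarith [mul_nonneg (sq_nonneg ν) (sub_nonneg.2 hσ)]
  · refine ⟨_, _, _, crossesUpAt_of_monotoneOn_Ici (monotoneOn_tailPotential_Ici hr)
      (fun y hy => tailPotential_le_at_threshold hr hy) hrν.le, ?_⟩
    field_simp
    nlinarith

/-- One-sided Vysochanskij–Petunin inequality: for a unimodal random variable `X` with mean `μ`
and finite non-zero variance `σ²`, for every `λ > √(8/3)` one has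
`P(X - μ ≥ λσ) ≤ 4/(9λ²)`; in particular `P(X - μ ≥ √(40/9)·σ) ≤ 1/10`. -/
theorem vysochanskij_petunin_one_sided
    {Ω : Type*} [MeasurableSpace Ω] (P : Measure Ω) [IsProbabilityMeasure P]
    (X : Ω → ℝ) (hX : Measurable X)
    (f : ℝ → ℝ) (m : ℝ)
    (hlaw : Measure.map X P = volume.withDensity (fun x => ENNReal.ofReal (f x)))
    (hmono : MonotoneOn f (Set.Iic m)) (hanti : AntitoneOn f (Set.Ici m))
    (μ σ : ℝ) (hμ : μ = ∫ ω, X ω ∂P)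
    (hfin : MemLp X 2 P)
    (hσ : σ ^ 2 = ∫ ω, (X ω - μ) ^ 2 ∂P) (hσpos : 0 < σ) :
    (∀ lam : ℝ, Real.sqrt (8 / 3) < lam →
        (P {ω | lam * σ ≤ X ω - μ}).toReal ≤ 4 / (9 * lam ^ 2)) ∧
      (P {ω | Real.sqrt (40 / 9) * σ ≤ X ω - μ}).toReal ≤ 1 / 10 := by
  have tail (lam : ℝ) (hlam : Real.sqrt (8 / 3) < lam) :
      (P {ω | lam * σ ≤ X ω - μ}).toReal ≤ 4 / (9 * lam ^ 2) := by
    have hlam0 : 0 < lam := (Real.sqrt_nonneg _).trans_lt hlam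
    have hlam2 : 8 / 3 < lam ^ 2 := (Real.sqrt_lt' hlam0).1 hlam
    obtain ⟨a, b, c, hΦ, hval⟩ := exists_crossesUpAt_tailPotential (σ := σ) (mul_pos hlam0 hσpos)
      (by nlinarith [mul_lt_mul_of_pos_right hlam2 (pow_pos hσpos 2)]) (m - μ)
    calc (P {ω | lam * σ ≤ X ω - μ}).toReal ≤ a * σ ^ 2 + c :=
          tail_le_of_crossesUpAt hX hlaw hmono hanti hμ hfin hσ hΦ
      _ ≤ 4 * σ ^ 2 / (9 * (lam * σ) ^ 2) := hval
      _ = 4 / (9 * lam ^ 2) := by field_simp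
  refine ⟨tail, ?_⟩
  have h := tail (Real.sqrt (40 / 9)) (Real.sqrt_lt_sqrt (by norm_num) (by norm_num))
  rwa [Real.sq_sqrt (by norm_num), show (4 : ℝ) / (9 * (40 / 9)) = 1 / 10 by norm_num] at h
end
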